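/- arXiv:2009.07931 — 4 statements merged into one kernel-verified Lean document; each statement's English description precedes it below -/
import Mathlib

section
/- Let a, b > 0, set Δ = 2^{−b/a} and c = (log 2)/a, and for i, j, k ∈ ℤ let Q(i,j,k) = [2^i·j, 2^i·(j+1)] × [Δ^i·k, Δ^i·(k+1)] × [i·c, (i+1)·c] ⊆ ℝ³. Then the family {Q(i,j,k) : i,j,k ∈ ℤ} is a tiling of ℝ³: (1) the union over all (i,j,k) ∈ ℤ³ of Q(i,j,k) is all of ℝ³, and (2) for any (i,j,k) ≠ (i',j',k'), the intersection Q(i,j,k) ∩ Q(i',j',k') has empty interior in ℝ³. -/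
open Set

lemma emptyInt (p q p' q' : ℝ) (h : min q q' ≤ max p p') :
    interior (Icc p q ∩ Icc p' q') = ∅ := by
  rw [Icc_inter_Icc, interior_Icc, Ioo_eq_empty (not_lt.2 h)]

lemma sep (t : ℝ) (ht : 0 < t) (m n : ℤ) (h : m ≠ n) :
    min (t * ((m:ℝ) + 1)) (t * ((n:ℝ) + 1)) ≤ max (t * (m:ℝ)) (t * (n:ℝ)) := by
  rcases h.lt_or_gt with h | h
  · have h1 : (m:ℝ) + 1 ≤ n := by exact_mod_cast h
    exact le_trans (min_le_left _ _) (le_trans (by nlinarith) (le_max_right _ _))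
  · have h1 : (n:ℝ) + 1 ≤ m := by exact_mod_cast h
    exact le_trans (min_le_right _ _) (le_trans (by nlinarith) (le_max_left _ _))

lemma floorb (t x : ℝ) (ht : 0 < t) :
    t * (⌊x / t⌋ : ℝ) ≤ x ∧ x ≤ t * ((⌊x / t⌋ : ℝ) + 1) := by
  have h1 := Int.floor_le (x / t)
  have h2 := (Int.lt_floor_add_one (x / t)).le
  have hx : (x / t) * t = x := div_mul_cancel₀ x ht.ne'
  constructor
  · nlinarith
  · nlinarith

/-- For `a, b > 0`, `Δ = 2^{−b/a}`, `c = (log 2)/a`, the boxes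
`Q(i,j,k) = [2^i j, 2^i (j+1)] × [Δ^i k, Δ^i (k+1)] × [ic, (i+1)c]` form a tiling
of `ℝ³`: their union is all of `ℝ³` and any two distinct tiles intersect in a set
with empty interior. -/
theorem sol_tiling (a b : ℝ) (ha : 0 < a) (hb : 0 < b)
    (Δ c : ℝ) (hΔ : Δ = (2 : ℝ) ^ (-b / a)) (hc : c = Real.log 2 / a)
    (Q : ℤ → ℤ → ℤ → Set (ℝ × ℝ × ℝ))
    (hQ : ∀ i j k : ℤ,
      Q i j k = Icc ((2 : ℝ) ^ i * (j : ℝ)) ((2 : ℝ) ^ i * ((j : ℝ) + 1)) ×ˢ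
        Icc (Δ ^ i * (k : ℝ)) (Δ ^ i * ((k : ℝ) + 1)) ×ˢ
        Icc ((i : ℝ) * c) (((i : ℝ) + 1) * c)) :
    (⋃ (i : ℤ) (j : ℤ) (k : ℤ), Q i j k) = univ ∧
    (∀ i j k i' j' k' : ℤ, (i, j, k) ≠ (i', j', k') →
      interior (Q i j k ∩ Q i' j' k') = ∅) := by
  have h2 : (0:ℝ) < 2 := by norm_num
  have hΔ0 : 0 < Δ := hΔ ▸ Real.rpow_pos_of_pos h2 _
  have hc0 : 0 < c := by
    rw [hc]; exact div_pos (Real.log_pos (by norm_num)) ha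
  constructor
  · ext ⟨x, y, z⟩
    simp only [mem_iUnion, mem_univ, iff_true]
    set i : ℤ := ⌊z / c⌋ with hi
    have hzi := floorb c z hc0
    have h2i : (0:ℝ) < (2:ℝ) ^ i := zpow_pos h2 i
    have hΔi : (0:ℝ) < Δ ^ i := zpow_pos hΔ0 i
    have hxj := floorb ((2:ℝ) ^ i) x h2i
    have hyk := floorb (Δ ^ i) y hΔi
    refine ⟨i, ⌊x / (2:ℝ) ^ i⌋, ⌊y / Δ ^ i⌋, ?_⟩
    rw [hQ]
    exact ⟨⟨hxj.1, hxj.2⟩, ⟨hyk.1, hyk.2⟩,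
      by rw [mul_comm]; exact hzi.1, by rw [mul_comm]; exact hzi.2⟩
  · intro i j k i' j' k' hne
    rw [hQ, hQ, prod_inter_prod, prod_inter_prod, interior_prod_eq, interior_prod_eq,
      Set.prod_eq_empty_iff, Set.prod_eq_empty_iff]
    rcases ne_or_eq i i' with hi | rfl
    · right; right
      apply emptyInt
      have := sep c hc0 i i' hi
      simpa [mul_comm c] using this
    · rcases ne_or_eq j j' with hj | rfl
      · left
        exact emptyInt _ _ _ _ (sep _ (zpow_pos h2 i) j j' hj)
      · right; left
        have hk : k ≠ k' := by
          intro h; exact hne (by rw [h])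
        exact emptyInt _ _ _ _ (sep _ (zpow_pos hΔ0 i) k k' hk)
end

section
/- Let a, b > 0, set Δ = 2^{−b/a} and c = (log 2)/a, and for i, j, k ∈ ℤ let Q(i,j,k) = [2^i·j, 2^i·(j+1)] × [Δ^i·k, Δ^i·(k+1)] × [i·c, (i+1)·c] ⊆ ℝ³. Let g = (α,β,γ) ∈ ℝ³ and let L_g : ℝ³ → ℝ³ be the left translation L_g(x,y,z) = (α + e^{aγ}·x, β + e^{−bγ}·y, γ + z). Then L_g maps every tile onto a tile (i.e., for every (i,j,k) ∈ ℤ³ there exists (i',j',k') ∈ ℤ³ with L_g(Q(i,j,k)) = Q(i',j',k')) if and only if α = 0, β = 0 and γ = m·c for some m ∈ ℤ. That is, the group of left translations of Sol(a,b) preserving the tiling is exactly the infinite cyclic subgroup generated by R̂. -/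
/-!
A left translation of `Sol(a,b)` acts on each coordinate by an increasing affine map, so it sends
the box `Q(i,j,k)` to a box, and it sends it onto a tile exactly when the corners match. Matching
the `z`-intervals forces `γ = m c` and shifts the level `i` by `m`; matching the lower corners
of the tiles `Q(i,0,0)` then shows that `α` is an integer multiple of `2^n` and `β` an integer
multiple of `Δ^n` for every `n ∈ ℤ`, which is only possible for `α = β = 0` since `2 ≠ 1 ≠ Δ`.
Conversely `R̂^m` scales the `x`- and `y`-axes by `2^m` and `Δ^m`, mapping `Q(i,j,k)` onto
`Q(i+m,j,k)`.
-/

open Set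

/-- The paper's tile `Q(i,j,k)` is `tile 2 Δ c i j k`. -/
def tile (u v c : ℝ) (i j k : ℤ) : Set (ℝ × ℝ × ℝ) :=
  Icc (u ^ i * (j : ℝ)) (u ^ i * ((j : ℝ) + 1)) ×ˢ
    Icc (v ^ i * (k : ℝ)) (v ^ i * ((k : ℝ) + 1)) ×ˢ
    Icc ((i : ℝ) * c) (((i : ℝ) + 1) * c)

/-- The left translation of `Sol(a,b)` by `(α,β,γ)` is
`diagAffine α β γ (exp (a γ)) (exp (-b γ))`. -/
def diagAffine (α β γ E F : ℝ) : ℝ × ℝ × ℝ → ℝ × ℝ × ℝ :=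
  Prod.map (fun x => α + E * x) (Prod.map (fun y => β + F * y) (fun z => γ + z))

lemma image_const_add_mul_Icc {α t : ℝ} (ht : 0 < t) (lo hi : ℝ) :
    (fun x => α + t * x) '' Icc lo hi = Icc (α + t * lo) (α + t * hi) := by
  simp only [add_comm α, image_affine_Icc' ht]

section Tiles

variable {u v c α β γ E F : ℝ}

lemma diagAffine_image_tile (hE : 0 < E) (hF : 0 < F) (i j k : ℤ) :
    diagAffine α β γ E F '' tile u v c i j k =
      Icc (α + E * (u ^ i * j)) (α + E * (u ^ i * (j + 1))) ×ˢ
        Icc (β + F * (v ^ i * k)) (β + F * (v ^ i * (k + 1))) ×ˢ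
        Icc (γ + i * c) (γ + (i + 1) * c) := by
  rw [diagAffine, tile, prodMap_image_prod, prodMap_image_prod, image_const_add_mul_Icc hE,
    image_const_add_mul_Icc hF, image_const_add_Icc]

lemma diagAffine_image_tile_eq_tile_iff (hu : 0 < u) (hv : 0 < v) (hc : 0 < c)
    (hE : 0 < E) (hF : 0 < F) (i j k i' j' k' : ℤ) :
    diagAffine α β γ E F '' tile u v c i j k = tile u v c i' j' k' ↔
      (α + E * (u ^ i * j) = u ^ i' * j' ∧ α + E * (u ^ i * (j + 1)) = u ^ i' * (j' + 1)) ∧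
      (β + F * (v ^ i * k) = v ^ i' * k' ∧ β + F * (v ^ i * (k + 1)) = v ^ i' * (k' + 1)) ∧
      (γ + i * c = i' * c ∧ γ + (i + 1) * c = (i' + 1) * c) := by
  have hx : α + E * (u ^ i * j) ≤ α + E * (u ^ i * (j + 1)) := by
    have := zpow_pos hu i
    gcongr
    linarith
  have hy : β + F * (v ^ i * k) ≤ β + F * (v ^ i * (k + 1)) := by
    have := zpow_pos hv i
    gcongr
    linarith
  have hz : γ + i * c ≤ γ + (i + 1) * c := by gcongr; linarith
  rw [diagAffine_image_tile hE hF, tile,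
    prod_eq_prod_iff_of_nonempty ((nonempty_Icc.2 hx).prod
      ((nonempty_Icc.2 hy).prod (nonempty_Icc.2 hz))),
    prod_eq_prod_iff_of_nonempty ((nonempty_Icc.2 hy).prod (nonempty_Icc.2 hz)),
    Icc_eq_Icc_iff hx, Icc_eq_Icc_iff hy, Icc_eq_Icc_iff hz]

end Tiles

lemma exists_abs_lt_zpow {u : ℝ} (hu0 : 0 < u) (hu1 : u ≠ 1) (x : ℝ) :
    ∃ n : ℤ, |x| < u ^ n := by
  rcases hu1.lt_or_gt with hu1 | hu1
  · obtain ⟨n, hn⟩ := pow_unbounded_of_one_lt |x| ((one_lt_inv₀ hu0).2 hu1)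
    exact ⟨-n, by rwa [zpow_neg, zpow_natCast, ← inv_pow]⟩
  · obtain ⟨n, hn⟩ := pow_unbounded_of_one_lt |x| hu1
    exact ⟨n, by rwa [zpow_natCast]⟩

lemma eq_zero_of_forall_eq_zpow_mul_int {u x : ℝ} (hu0 : 0 < u) (hu1 : u ≠ 1)
    (h : ∀ n : ℤ, ∃ j : ℤ, x = u ^ n * j) : x = 0 := by
  obtain ⟨n, hn⟩ := exists_abs_lt_zpow hu0 hu1 x
  obtain ⟨j, rfl⟩ := h n
  have hpow := zpow_pos hu0 n
  have hj : |(j : ℝ)| < 1 := by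
    rw [abs_mul, abs_of_pos hpow] at hn
    nlinarith
  rw [Int.cast_abs.symm, ← Int.cast_one, Int.cast_lt, Int.abs_lt_one_iff] at hj
  simp [hj]

theorem diagAffine_maps_tiles_iff {u v c α β γ E F : ℝ} (hu0 : 0 < u) (hu1 : u ≠ 1)
    (hv0 : 0 < v) (hv1 : v ≠ 1) (hc : 0 < c) (hE : 0 < E) (hF : 0 < F) :
    (∀ i j k : ℤ, ∃ i' j' k' : ℤ,
        diagAffine α β γ E F '' tile u v c i j k = tile u v c i' j' k') ↔
      α = 0 ∧ β = 0 ∧ ∃ m : ℤ, γ = m * c ∧ E = u ^ m ∧ F = v ^ m := by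
  simp only [diagAffine_image_tile_eq_tile_iff hu0 hv0 hc hE hF]
  constructor
  · intro H
    obtain ⟨m, j₀, k₀, ⟨hx, hx'⟩, ⟨hy, hy'⟩, hγ, -⟩ := H 0 0 0
    simp only [zpow_zero, Int.cast_zero, mul_zero, zero_mul, add_zero, zero_add, one_mul]
      at hx hx' hy hy' hγ
    have level_shift : ∀ i i' : ℤ, γ + i * c = i' * c → i' = i + m := fun i i' h => by
      have : (i' : ℝ) = i + m := mul_right_cancel₀ hc.ne' (by rw [hγ] at h; linarith)
      exact_mod_cast this
    have lower_corner : ∀ n : ℤ, ∃ j k : ℤ, α = u ^ n * j ∧ β = v ^ n * k := fun n => by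
      obtain ⟨i', j', k', ⟨hx, -⟩, ⟨hy, -⟩, hz, -⟩ := H (n - m) 0 0
      obtain rfl : i' = n := by rw [level_shift _ _ hz]; ring
      exact ⟨j', k', by simpa using hx, by simpa using hy⟩
    refine ⟨eq_zero_of_forall_eq_zpow_mul_int hu0 hu1 fun n => ?_,
      eq_zero_of_forall_eq_zpow_mul_int hv0 hv1 fun n => ?_, m, hγ, ?_, ?_⟩
    · obtain ⟨j, -, hj, -⟩ := lower_corner n
      exact ⟨j, hj⟩
    · obtain ⟨-, k, -, hk⟩ := lower_corner n
      exact ⟨k, hk⟩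
    · linarith
    · linarith
  · rintro ⟨rfl, rfl, m, rfl, rfl, rfl⟩ i j k
    refine ⟨i + m, j, k, ?_⟩
    simp only [zpow_add₀ hu0.ne', zpow_add₀ hv0.ne', Int.cast_add]
    refine ⟨⟨?_, ?_⟩, ⟨?_, ?_⟩, ?_, ?_⟩ <;> ring

lemma exp_mul_int_mul_log_div {x : ℝ} (hx : 0 < x) (s a : ℝ) (m : ℤ) :
    Real.exp (s * (m * (Real.log x / a))) = (x ^ (s / a)) ^ m := by
  rw [← Real.rpow_intCast, ← Real.rpow_mul hx.le, Real.rpow_def_of_pos hx]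
  ring_nf

/-- For `a, b > 0`, `Δ = 2^{−b/a}`, `c = (log 2)/a`, a left translation
`L_g(x,y,z) = (α + e^{aγ}x, β + e^{−bγ}y, γ + z)` of `Sol(a,b)` by `g = (α,β,γ)`
maps every tile `Q(i,j,k)` onto a tile if and only if `α = 0`, `β = 0` and
`γ = mc` for some `m ∈ ℤ`; i.e., the left translations preserving the tiling
form exactly the infinite cyclic subgroup generated by `R̂`. -/
theorem tiling_symmetry_group (a b : ℝ) (ha : 0 < a) (hb : 0 < b)
    (Δ c : ℝ) (hΔ : Δ = (2 : ℝ) ^ (-b / a)) (hc : c = Real.log 2 / a)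
    (Q : ℤ → ℤ → ℤ → Set (ℝ × ℝ × ℝ))
    (hQ : ∀ i j k : ℤ,
      Q i j k = Icc ((2 : ℝ) ^ i * (j : ℝ)) ((2 : ℝ) ^ i * ((j : ℝ) + 1)) ×ˢ
        Icc (Δ ^ i * (k : ℝ)) (Δ ^ i * ((k : ℝ) + 1)) ×ˢ
        Icc ((i : ℝ) * c) (((i : ℝ) + 1) * c))
    (g : ℝ × ℝ × ℝ) (L : ℝ × ℝ × ℝ → ℝ × ℝ × ℝ)
    (hL : ∀ p : ℝ × ℝ × ℝ,
      L p = (g.1 + Real.exp (a * g.2.2) * p.1,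
             g.2.1 + Real.exp (-b * g.2.2) * p.2.1,
             g.2.2 + p.2.2)) :
    (∀ i j k : ℤ, ∃ i' j' k' : ℤ, L '' Q i j k = Q i' j' k') ↔
      (g.1 = 0 ∧ g.2.1 = 0 ∧ ∃ m : ℤ, g.2.2 = (m : ℝ) * c) := by
  obtain ⟨α, β, γ⟩ := g
  dsimp only at hL ⊢
  obtain rfl : Q = tile 2 Δ c := funext₃ hQ
  obtain rfl : L = diagAffine α β γ (Real.exp (a * γ)) (Real.exp (-b * γ)) := funext hL
  have hc0 : 0 < c := hc ▸ div_pos (Real.log_pos one_lt_two) ha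
  have hΔ0 : 0 < Δ := hΔ ▸ Real.rpow_pos_of_pos two_pos _
  have hΔ1 : Δ < 1 :=
    hΔ ▸ Real.rpow_lt_one_of_one_lt_of_neg one_lt_two (div_neg_of_neg_of_pos (by linarith) ha)
  rw [diagAffine_maps_tiles_iff two_pos (by norm_num) hΔ0 hΔ1.ne hc0 (Real.exp_pos _)
    (Real.exp_pos _)]
  refine and_congr_right' <| and_congr_right' <| exists_congr fun m =>
    ⟨fun h => h.1, fun hγ => ⟨hγ, ?_, ?_⟩⟩
  · rw [hγ, hc, exp_mul_int_mul_log_div two_pos, div_self ha.ne', Real.rpow_one]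
  · rw [hγ, hc, hΔ, exp_mul_int_mul_log_div two_pos]
end

section
/- Let a, b be real numbers and let μ_ℓ be the measure on ℝ³ given by the density e^{(b−a)z} with respect to Lebesgue measure, i.e. μ_ℓ = volume.withDensity((x,y,z) ↦ exp((b−a)·z)). Then μ_ℓ is left-invariant: for every g = (α,β,γ) ∈ ℝ³, the pushforward of μ_ℓ under the left translation L_g(x,y,z) = (α + e^{aγ}·x, β + e^{−bγ}·y, γ + z) equals μ_ℓ. -/
/-!
Left translation by `g = (α, β, γ)` is affine with diagonal linear part
`diag (e^{aγ}, e^{-bγ}, 1)`, so it pushes Lebesgue measure forward to `e^{(b-a)γ}` times itself.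
The density transforms by the reciprocal factor, `e^{(b-a)z} = e^{(a-b)γ} e^{(b-a)(γ+z)}`,
and the two factors cancel.
-/

open MeasureTheory Measure
open scoped ENNReal

lemma map_withDensity_comp {α β : Type*} [MeasurableSpace α] [MeasurableSpace β]
    {f : α → β} (hf : Measurable f) {d : β → ℝ≥0∞} (hd : Measurable d) (μ : Measure α) :
    (μ.withDensity (d ∘ f)).map f = (μ.map f).withDensity d := by
  ext s hs
  rw [map_apply hf hs, withDensity_apply _ (hf hs), withDensity_apply _ hs,
    setLIntegral_map hs hd hf, Function.comp_def]

lemma map_withDensity_eq_smul {α : Type*} [MeasurableSpace α] {μ : Measure α} {f : α → α}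
    (hf : Measurable f) {d : α → ℝ≥0∞} (hd : Measurable d) {c k : ℝ≥0∞}
    (hμ : μ.map f = c • μ) (hdf : ∀ x, d x = k * d (f x)) :
    (μ.withDensity d).map f = (c * k) • μ.withDensity d := by
  have hd_comp : d = (k • d) ∘ f := funext hdf
  calc (μ.withDensity d).map f = (μ.withDensity ((k • d) ∘ f)).map f := by rw [← hd_comp]
    _ = (c • μ).withDensity (k • d) := by rw [map_withDensity_comp hf (hd.const_smul k), hμ]
    _ = (c * k) • μ.withDensity d := by
      rw [withDensity_smul_measure, withDensity_smul k hd, smul_smul]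

lemma Real.map_volume_add_mul (c : ℝ) {r : ℝ} (hr : r ≠ 0) :
    volume.map (fun x : ℝ => c + r * x) = ENNReal.ofReal |r⁻¹| • volume := by
  change volume.map ((c + ·) ∘ (r * ·)) = _
  rw [← map_map (measurable_const_add c) (measurable_const_mul r), Real.map_volume_mul_left hr,
    Measure.map_smul, map_add_left_eq_self]

namespace Sol

open Real

noncomputable def mulLeft (a b : ℝ) (g : ℝ × ℝ × ℝ) (p : ℝ × ℝ × ℝ) : ℝ × ℝ × ℝ :=
  (g.1 + exp (a * g.2.2) * p.1, g.2.1 + exp (-b * g.2.2) * p.2.1, g.2.2 + p.2.2)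

variable (a b : ℝ) (g : ℝ × ℝ × ℝ)

lemma mulLeft_eq_prodMap : mulLeft a b g =
    Prod.map (fun x => g.1 + exp (a * g.2.2) * x)
      (Prod.map (fun y => g.2.1 + exp (-b * g.2.2) * y) (fun z => g.2.2 + z)) :=
  rfl

lemma measurable_mulLeft : Measurable (mulLeft a b g) := by
  rw [mulLeft_eq_prodMap]
  fun_prop

lemma map_mulLeft_volume :
    volume.map (mulLeft a b g) = ENNReal.ofReal (exp ((b - a) * g.2.2)) • volume := by
  rw [mulLeft_eq_prodMap, volume_eq_prod, volume_eq_prod,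
    ← map_prod_map _ _ (by fun_prop) (by fun_prop), ← map_prod_map _ _ (by fun_prop) (by fun_prop),
    Real.map_volume_add_mul _ (exp_pos _).ne', Real.map_volume_add_mul _ (exp_pos _).ne',
    map_add_left_eq_self, prod_smul_left, prod_smul_left, prod_smul_right, smul_smul,
    ← ENNReal.ofReal_mul (abs_nonneg _), ← abs_mul, ← exp_neg, ← exp_neg, ← exp_add,
    abs_of_pos (exp_pos _)]
  congr 3
  ring

end Sol

/-- The measure `μ_ℓ = e^{(b−a)z} dx dy dz` on `ℝ³` is invariant under every left
translation `L_g(x,y,z) = (α + e^{aγ}x, β + e^{−bγ}y, γ + z)` of `Sol(a,b)`: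
it is the left Haar measure. -/
theorem left_haar_measure_invariant (a b : ℝ) :
    ∀ g : ℝ × ℝ × ℝ,
      Measure.map
        (fun p : ℝ × ℝ × ℝ =>
          ((g.1 + Real.exp (a * g.2.2) * p.1,
            g.2.1 + Real.exp (-b * g.2.2) * p.2.1,
            g.2.2 + p.2.2) : ℝ × ℝ × ℝ))
        (volume.withDensity fun p : ℝ × ℝ × ℝ =>
          ENNReal.ofReal (Real.exp ((b - a) * p.2.2))) =
      volume.withDensity fun p : ℝ × ℝ × ℝ =>
        ENNReal.ofReal (Real.exp ((b - a) * p.2.2)) := by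
  intro g
  have hdensity : ∀ p : ℝ × ℝ × ℝ, ENNReal.ofReal (Real.exp ((b - a) * p.2.2)) =
      ENNReal.ofReal (Real.exp ((a - b) * g.2.2)) *
        ENNReal.ofReal (Real.exp ((b - a) * (Sol.mulLeft a b g p).2.2)) := fun p => by
    rw [← ENNReal.ofReal_mul (Real.exp_nonneg _), ← Real.exp_add]
    simp only [Sol.mulLeft]
    ring_nf
  refine (map_withDensity_eq_smul (Sol.measurable_mulLeft a b g) (by fun_prop)
    (Sol.map_mulLeft_volume a b g) hdensity).trans ?_
  rw [← ENNReal.ofReal_mul (Real.exp_nonneg _),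
    ← Real.exp_add, ← add_mul, sub_add_sub_cancel, sub_self, zero_mul, Real.exp_zero,
    ENNReal.ofReal_one, one_smul]
end

section
/- Let a, b be real numbers and let μ_ℓ = volume.withDensity((x,y,z) ↦ exp((b−a)·z)) be the left Haar measure of Sol(a,b) on ℝ³. Then for every g = (α,β,γ) ∈ ℝ³, the pushforward of μ_ℓ under the right translation R_g(x,y,z) = (x + e^{az}·α, y + e^{−bz}·β, z + γ) equals e^{(a−b)γ} · μ_ℓ. Consequently the modular function of Sol(a,b) is λ(α,β,γ) = e^{(a−b)γ} (with the convention ∫ f(g·g₀) dμ_ℓ(g) = λ(g₀) ∫ f dμ_ℓ). -/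
open MeasureTheory
open scoped ENNReal

/-! Lebesgue measure is invariant under every right translation `R_g` of `Sol(a,b)`: in the
coordinates `((x, y), z)` the map is the shear `((x, y), z) ↦ ((x, y) + u(z), z + γ)`, which
preserves a product measure by Fubini. The density `e^{(b−a)z}` is multiplied by the constant
`e^{(b−a)γ}` under `R_g`, so `R_g` scales `μ_ℓ` by `e^{(a−b)γ}`. -/

namespace MeasureTheory.MeasurePreserving

variable {α β : Type*} [MeasurableSpace α] [MeasurableSpace β]

theorem map_withDensity_comp {μ : Measure α} {ν : Measure β} {f : α → β}
    (hf : MeasurePreserving f μ ν) {ρ : β → ℝ≥0∞} (hρ : Measurable ρ) :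
    (μ.withDensity (ρ ∘ f)).map f = ν.withDensity ρ := by
  ext s hs
  rw [Measure.map_apply hf.measurable hs, withDensity_apply _ (hf.measurable hs),
    withDensity_apply _ hs]
  exact hf.setLIntegral_comp_preimage hs hρ

theorem map_withDensity_of_eq_mul_comp {μ : Measure α} {f : α → α}
    (hf : MeasurePreserving f μ μ) {ρ : α → ℝ≥0∞} (hρ : Measurable ρ) {c : ℝ≥0∞}
    (hc : ∀ x, ρ x = c * ρ (f x)) :
    (μ.withDensity ρ).map f = c • μ.withDensity ρ := by
  have hρ_eq : ρ = c • (ρ ∘ f) := funext hc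
  conv_lhs => rw [hρ_eq, withDensity_smul c (hρ.comp hf.measurable), Measure.map_smul]
  rw [hf.map_withDensity_comp hρ]

end MeasureTheory.MeasurePreserving

theorem measurePreserving_add_skew_prod {G β : Type*} [AddGroup G] [MeasurableSpace G]
    [MeasurableAdd₂ G] [MeasurableSpace β] (μ : Measure G) [μ.IsAddRightInvariant] [SFinite μ]
    {ν ν' : Measure β} [SFinite ν] [SFinite ν'] {f : β → β} (hf : MeasurePreserving f ν ν')
    {u : β → G} (hu : Measurable u) :
    MeasurePreserving (fun p : G × β => (p.1 + u p.2, f p.2)) (μ.prod ν) (μ.prod ν') :=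
  (Measure.measurePreserving_swap.comp <|
    hf.skew_product (g := fun z x => x + u z) (by fun_prop)
      (ae_of_all _ fun z => map_add_right_eq_self μ (u z))).comp
    Measure.measurePreserving_swap

theorem measurePreserving_sol_mul_right (a b : ℝ) (g : ℝ × ℝ × ℝ) :
    MeasurePreserving
      (fun p : ℝ × ℝ × ℝ =>
        ((p.1 + Real.exp (a * p.2.2) * g.1,
          p.2.1 + Real.exp (-b * p.2.2) * g.2.1,
          p.2.2 + g.2.2) : ℝ × ℝ × ℝ)) volume volume := by
  have hshear : MeasurePreserving
      (fun p : (ℝ × ℝ) × ℝ =>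
        (p.1 + (Real.exp (a * p.2) * g.1, Real.exp (-b * p.2) * g.2.1), p.2 + g.2.2))
      volume volume :=
    measurePreserving_add_skew_prod volume (measurePreserving_add_right volume g.2.2)
      (u := fun z => (Real.exp (a * z) * g.1, Real.exp (-b * z) * g.2.1)) (by fun_prop)
  exact volume_preserving_prodAssoc.comp (hshear.comp volume_preserving_prodAssoc.symm)

/-- The pushforward of the left Haar measure `μ_ℓ = e^{(b−a)z} dx dy dz` of
`Sol(a,b)` under the right translation `R_g`, `g = (α,β,γ)`, equals
`e^{(a−b)γ} · μ_ℓ`; hence the modular function of `Sol(a,b)` is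
`λ(α,β,γ) = e^{(a−b)γ}`. -/
theorem modular_function_sol (a b : ℝ) :
    ∀ g : ℝ × ℝ × ℝ,
      Measure.map
        (fun p : ℝ × ℝ × ℝ =>
          ((p.1 + Real.exp (a * p.2.2) * g.1,
            p.2.1 + Real.exp (-b * p.2.2) * g.2.1,
            p.2.2 + g.2.2) : ℝ × ℝ × ℝ))
        (volume.withDensity fun p : ℝ × ℝ × ℝ =>
          ENNReal.ofReal (Real.exp ((b - a) * p.2.2))) =
      ENNReal.ofReal (Real.exp ((a - b) * g.2.2)) •
        (volume.withDensity fun p : ℝ × ℝ × ℝ =>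
          ENNReal.ofReal (Real.exp ((b - a) * p.2.2))) := by
  intro g
  refine (measurePreserving_sol_mul_right a b g).map_withDensity_of_eq_mul_comp
    (by fun_prop) fun p => ?_
  rw [← ENNReal.ofReal_mul (Real.exp_nonneg _), ← Real.exp_add]
  ring_nf
end
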